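/- arXiv:1207.6134 — 2 statements merged into one kernel-verified Lean document; each statement's English description precedes it below -/
import Mathlib

section
/- Let (a_n)_{n≥1} be a sequence of complex numbers and suppose there is α > 0 and ε ∈ (0, 1/2) such that |∑_{m ≤ M} a_m e^{2πi m x}| ≤ α * M^{1/2 + ε} for all integers M ≥ 1, for a fixed real x. Then for all y ∈ (0, 1], |y * ∑_{n=1}^∞ (∑_{m≤n} a_m e^{2πimx} − ∑_{m≤n−1} a_m e^{2πimx}) * n^{1/2} * e^{−2π n y}| ≤ C_ε * α * y^{−ε} for a constant C_ε depending only on ε. Equivalently, |y ∑_{n≥1} a_n n^{1/2} e^{2πi n x} e^{−2π n y}| ≤ C_ε α y^{−ε}. -/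
/-!
Write `S n = ∑_{m ≤ n} a_m e(mx)`, so that `|S n| ≤ α n^(1/2+ε)`, and `w n = n^(1/2) e^(-2πny)`.
Abel summation turns `∑ (S n - S (n-1)) w n` into `∑ S n (w n - w (n+1))`, the boundary terms
vanishing because `S n w n` decays geometrically. The difference `w n - w (n+1)` is at most
`(2πy n^(1/2) + n^(-1/2)/2) e^(-2πny)`, and `n^s e^(-2πny) ≤ y^(-s) e^(-πny)` for `0 ≤ s ≤ 2`,
so the `n`-th term is `O(α y^(-ε) e^(-πny))`; summing the geometric series costs a factor `1/y`,
which the prefactor `y` absorbs.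
-/

open Real Finset

theorem hasSum_sub_mul_of_summable {R : Type*} [Ring R] [TopologicalSpace R] [IsTopologicalRing R]
    {S g : ℕ → R} (h0 : S 0 = 0) (hu : Summable fun n => S n * g n)
    (hv : Summable fun n => S n * (g n - g (n + 1))) :
    HasSum (fun n => (S (n + 1) - S n) * g (n + 1)) (∑' n, S n * (g n - g (n + 1))) := by
  have htel : HasSum (fun n => S (n + 1) * g (n + 1) - S n * g n) 0 := by
    simpa [h0] using ((hasSum_nat_add_iff' 1).mpr hu.hasSum).sub hu.hasSum
  convert htel.add hv.hasSum using 1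
  · ext n
    simp only [sub_mul, mul_sub]
    abel
  · rw [zero_add]

lemma rpow_le_exp_pi_mul {s t : ℝ} (ht : 0 ≤ t) (hs0 : 0 ≤ s) (hs2 : s ≤ 2) :
    t ^ s ≤ exp (π * t) := by
  rcases le_total t 1 with h1 | h1
  · exact (rpow_le_one ht h1 hs0).trans (one_le_exp (by positivity))
  · calc t ^ s ≤ t ^ (2 : ℝ) := rpow_le_rpow_of_exponent_le h1 hs2
      _ = t ^ 2 := rpow_two t
      _ ≤ exp t ^ 2 := by gcongr; linarith [add_one_le_exp t]
      _ = exp (2 * t) := by rw [← exp_nat_mul]; norm_num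
      _ ≤ exp (π * t) := by gcongr; linarith [pi_gt_three]

lemma natCast_rpow_mul_exp_le {s y : ℝ} (hy : 0 < y) (hs0 : 0 ≤ s) (hs2 : s ≤ 2) (n : ℕ) :
    (n : ℝ) ^ s * exp (-2 * π * n * y) ≤ y ^ (-s) * exp (-(π * y)) ^ n := by
  have hny : (n : ℝ) ^ s * y ^ s ≤ exp (π * (n * y)) := by
    rw [← mul_rpow n.cast_nonneg hy.le]
    exact rpow_le_exp_pi_mul (by positivity) hs0 hs2
  have hys : 0 < y ^ s := rpow_pos_of_pos hy s
  rw [rpow_neg hy.le, ← exp_nat_mul, show -2 * π * n * y = -(π * (n * y)) + -(π * (n * y)) by ring,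
    exp_add, show (n : ℝ) * -(π * y) = -(π * (n * y)) by ring, ← mul_assoc]
  gcongr
  rw [exp_neg, ← div_eq_mul_inv, div_le_iff₀ (exp_pos _), inv_mul_eq_div, le_div_iff₀ hys]
  exact hny

lemma tsum_exp_neg_pow_le {t : ℝ} (ht : 0 < t) : ∑' n : ℕ, exp (-t) ^ n ≤ exp t / t := by
  rw [tsum_geometric_of_lt_one (exp_pos _).le (exp_lt_one_iff.mpr (by linarith)), ← inv_div]
  apply inv_anti₀ (by positivity)
  rw [exp_neg, div_le_iff₀ (exp_pos t), sub_mul, inv_mul_cancel₀ (exp_pos t).ne']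
  linarith [add_one_le_exp t]

lemma sqrt_add_one_sub_sqrt_le {x : ℝ} (hx : 0 < x) : √(x + 1) - √x ≤ 1 / (2 * √x) := by
  have hs : 0 < √x := sqrt_pos.mpr hx
  have hst : √x ≤ √(x + 1) := sqrt_le_sqrt (by linarith)
  have hsq : √(x + 1) ^ 2 - √x ^ 2 = 1 := by
    rw [sq_sqrt hx.le, sq_sqrt (by linarith)]; ring
  -- `(√(x + 1) - √x) (√(x + 1) + √x) = 1` and `√(x + 1) + √x ≥ 2√x`
  rw [le_div_iff₀ (by positivity)]
  nlinarith

noncomputable def sqrtExpWeight (y : ℝ) (n : ℕ) : ℝ :=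
  (n : ℝ) ^ ((1 : ℝ) / 2) * exp (-2 * π * n * y)

lemma sqrtExpWeight_nonneg (y : ℝ) (n : ℕ) : 0 ≤ sqrtExpWeight y n := by
  unfold sqrtExpWeight; positivity

lemma abs_sqrtExpWeight_sub_succ_le {y : ℝ} (hy : 0 ≤ y) {n : ℕ} (hn : 0 < n) :
    |sqrtExpWeight y n - sqrtExpWeight y (n + 1)|
      ≤ (2 * π * y * √n + 1 / (2 * √n)) * exp (-2 * π * n * y) := by
  have hn' : (0 : ℝ) < n := by exact_mod_cast hn
  set E := exp (-2 * π * n * y)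
  set D := exp (-(2 * π * y))
  have hE : 0 < E := exp_pos _
  have hD : 0 < D := exp_pos _
  have hD1 : D ≤ 1 := exp_le_one_iff.mpr (by simp only [neg_nonpos]; positivity)
  have hDlow : 1 - D ≤ 2 * π * y := by linarith [one_sub_le_exp_neg (2 * π * y)]
  have hst : √n ≤ √(n + 1) := sqrt_le_sqrt (by linarith)
  have hsucc : sqrtExpWeight y (n + 1) = √(n + 1) * (E * D) := by
    rw [sqrtExpWeight, ← sqrt_eq_rpow, ← exp_add]; push_cast; ring_nf
  rw [hsucc, sqrtExpWeight, ← sqrt_eq_rpow]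
  calc |√n * E - √(n + 1) * (E * D)| = |√n * E * (1 - D) - (√(n + 1) - √n) * (E * D)| := by
        ring_nf
    _ ≤ |√n * E * (1 - D)| + |(√(n + 1) - √n) * (E * D)| := abs_sub _ _
    _ = √n * E * (1 - D) + (√(n + 1) - √n) * (E * D) := by
        have hD1' : 0 ≤ 1 - D := by linarith
        have hst' : 0 ≤ √(n + 1) - √n := by linarith
        rw [abs_of_nonneg (by positivity), abs_of_nonneg (by positivity)]
    _ ≤ √n * E * (2 * π * y) + 1 / (2 * √n) * E := by
        gcongr
        · exact sqrt_add_one_sub_sqrt_le hn'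
        · exact mul_le_of_le_one_right hE.le hD1
    _ = (2 * π * y * √n + 1 / (2 * √n)) * E := by ring

lemma rpow_mul_sqrtExpWeight_le {ε y : ℝ} (hy : 0 < y) (hε0 : 0 ≤ ε) (hε1 : ε ≤ 1) (n : ℕ) :
    (n : ℝ) ^ ((1 : ℝ) / 2 + ε) * sqrtExpWeight y n ≤ y ^ (-(1 + ε)) * exp (-(π * y)) ^ n := by
  rw [sqrtExpWeight, ← mul_assoc, ← rpow_add' n.cast_nonneg (by linarith)]
  convert natCast_rpow_mul_exp_le hy (s := 1 + ε) (by linarith) (by linarith) n using 3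
  ring

lemma rpow_mul_abs_sqrtExpWeight_sub_succ_le {ε y : ℝ} (hy : 0 < y) (hε0 : 0 ≤ ε) (hε1 : ε ≤ 1)
    (n : ℕ) :
    (n : ℝ) ^ ((1 : ℝ) / 2 + ε) * |sqrtExpWeight y n - sqrtExpWeight y (n + 1)|
      ≤ (2 * π + 1 / 2) * y ^ (-ε) * exp (-(π * y)) ^ n := by
  rcases Nat.eq_zero_or_pos n with rfl | hn
  · rw [Nat.cast_zero, zero_rpow (by positivity), zero_mul]
    positivity
  have hn' : (0 : ℝ) < n := by exact_mod_cast hn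
  have hmul : (n : ℝ) ^ ((1 : ℝ) / 2 + ε) * √n = (n : ℝ) ^ (1 + ε) := by
    rw [sqrt_eq_rpow, ← rpow_add hn']; ring_nf
  have hdiv : (n : ℝ) ^ ((1 : ℝ) / 2 + ε) / √n = (n : ℝ) ^ ε := by
    rw [sqrt_eq_rpow, ← rpow_sub hn']; ring_nf
  have hy_rpow : y * y ^ (-(1 + ε)) = y ^ (-ε) := by
    rw [neg_add, rpow_add hy, rpow_neg_one]; field_simp
  calc (n : ℝ) ^ ((1 : ℝ) / 2 + ε) * |sqrtExpWeight y n - sqrtExpWeight y (n + 1)|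
      ≤ (n : ℝ) ^ ((1 : ℝ) / 2 + ε)
          * ((2 * π * y * √n + 1 / (2 * √n)) * exp (-2 * π * n * y)) := by
        gcongr
        exact abs_sqrtExpWeight_sub_succ_le hy.le hn
    _ = 2 * π * y * ((n : ℝ) ^ (1 + ε) * exp (-2 * π * n * y))
          + 1 / 2 * ((n : ℝ) ^ ε * exp (-2 * π * n * y)) := by
        rw [← hmul, ← hdiv]; ring
    _ ≤ 2 * π * y * (y ^ (-(1 + ε)) * exp (-(π * y)) ^ n)
          + 1 / 2 * (y ^ (-ε) * exp (-(π * y)) ^ n) := by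
        gcongr 2 * π * y * ?_ + 1 / 2 * ?_
        · exact natCast_rpow_mul_exp_le hy (by linarith) (by linarith) n
        · exact natCast_rpow_mul_exp_le hy hε0 (by linarith) n
    _ = (2 * π + 1 / 2) * y ^ (-ε) * exp (-(π * y)) ^ n := by
        rw [← mul_assoc _ (y ^ _), mul_assoc _ y, hy_rpow]; ring

theorem norm_mul_tsum_sqrtExpWeight_le {b : ℕ → ℂ} {α ε y : ℝ} (hα : 0 ≤ α)
    (hε0 : 0 ≤ ε) (hε1 : ε ≤ 1)
    (hS : ∀ M : ℕ, 1 ≤ M → ‖∑ m ∈ Icc 1 M, b m‖ ≤ α * (M : ℝ) ^ ((1 : ℝ) / 2 + ε))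
    (hy : 0 < y) (hy1 : y ≤ 1) :
    ‖(y : ℂ) * ∑' n : ℕ, b (n + 1) * (sqrtExpWeight y (n + 1) : ℂ)‖
      ≤ (2 * π + 1 / 2) * exp π / π * α * y ^ (-ε) := by
  set S : ℕ → ℂ := fun M => ∑ m ∈ Icc 1 M, b m
  set g : ℕ → ℂ := fun n => (sqrtExpWeight y n : ℂ)
  set r := exp (-(π * y))
  have hS' : ∀ n, ‖S n‖ ≤ α * (n : ℝ) ^ ((1 : ℝ) / 2 + ε) := by
    intro n
    rcases Nat.eq_zero_or_pos n with rfl | hn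
    · rw [Nat.cast_zero, zero_rpow (by positivity), mul_zero]
      simp [S]
    · exact hS n hn
  have hb : ∀ n, b (n + 1) = S (n + 1) - S n := fun n => by simp [S, sum_Icc_succ_top]
  have hu : ∀ n, ‖S n * g n‖ ≤ α * y ^ (-(1 + ε)) * r ^ n := by
    intro n
    rw [norm_mul, Complex.norm_real, norm_of_nonneg (sqrtExpWeight_nonneg y n), mul_assoc]
    calc ‖S n‖ * sqrtExpWeight y n
        ≤ α * (n : ℝ) ^ ((1 : ℝ) / 2 + ε) * sqrtExpWeight y n := by
          gcongr; exacts [sqrtExpWeight_nonneg y n, hS' n]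
      _ ≤ α * (y ^ (-(1 + ε)) * r ^ n) := by
          rw [mul_assoc]
          exact mul_le_mul_of_nonneg_left (rpow_mul_sqrtExpWeight_le hy hε0 hε1 n) hα
  have hv : ∀ n, ‖S n * (g n - g (n + 1))‖ ≤ α * ((2 * π + 1 / 2) * y ^ (-ε)) * r ^ n := by
    intro n
    rw [norm_mul, ← Complex.ofReal_sub, Complex.norm_real, norm_eq_abs, mul_assoc]
    calc ‖S n‖ * |sqrtExpWeight y n - sqrtExpWeight y (n + 1)|
        ≤ α * (n : ℝ) ^ ((1 : ℝ) / 2 + ε) * |sqrtExpWeight y n - sqrtExpWeight y (n + 1)| := by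
          gcongr; exact hS' n
      _ ≤ α * ((2 * π + 1 / 2) * y ^ (-ε) * r ^ n) := by
          rw [mul_assoc]
          exact mul_le_mul_of_nonneg_left
            (rpow_mul_abs_sqrtExpWeight_sub_succ_le hy hε0 hε1 n) hα
  have hr : r < 1 := exp_lt_one_iff.mpr (by simp only [neg_lt_zero]; positivity)
  have hgeo : Summable (r ^ ·) := summable_geometric_of_lt_one (exp_pos _).le hr
  have hv_norm : Summable fun n => ‖S n * (g n - g (n + 1))‖ :=
    .of_nonneg_of_le (fun _ => norm_nonneg _) hv (hgeo.mul_left _)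
  have habel := hasSum_sub_mul_of_summable (S := S) (g := g) (by simp [S])
    (.of_norm_bounded (hgeo.mul_left _) hu) hv_norm.of_norm
  simp_rw [hb]
  rw [habel.tsum_eq]
  calc ‖(y : ℂ) * ∑' n, S n * (g n - g (n + 1))‖
      ≤ y * ∑' n, ‖S n * (g n - g (n + 1))‖ := by
        rw [norm_mul, Complex.norm_real, norm_of_nonneg hy.le]
        gcongr
        exact norm_tsum_le_tsum_norm hv_norm
    _ ≤ y * ∑' n, α * ((2 * π + 1 / 2) * y ^ (-ε)) * r ^ n := by
        gcongr ?_ * ?_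
        exact hv_norm.tsum_le_tsum hv (hgeo.mul_left _)
    _ = y * (α * ((2 * π + 1 / 2) * y ^ (-ε))) * ∑' n : ℕ, r ^ n := by
        rw [tsum_mul_left, mul_assoc y]
    _ ≤ y * (α * ((2 * π + 1 / 2) * y ^ (-ε))) * (exp (π * y) / (π * y)) := by
        gcongr
        exact tsum_exp_neg_pow_le (by positivity)
    _ ≤ y * (α * ((2 * π + 1 / 2) * y ^ (-ε))) * (exp π / (π * y)) := by
        gcongr
        exact mul_le_of_le_one_right pi_pos.le hy1
    _ = (2 * π + 1 / 2) * exp π / π * α * y ^ (-ε) := by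
        field_simp

/-- if the twisted partial sums of `(a_n)` satisfy
`|∑_{m ≤ M} a_m e(mx)| ≤ α M^(1/2+ε)` for all `M ≥ 1`, then for `0 < y ≤ 1`,
`|y ∑_{n ≥ 1} a_n n^(1/2) e(nx) e^{-2πny}| ≤ C_ε α y^{-ε}`, where `C_ε` depends only on `ε`. -/
theorem stmt_3 (ε : ℝ) (hε : 0 < ε) (hε' : ε < 1 / 2) :
    ∃ C : ℝ, 0 < C ∧
      ∀ (a : ℕ → ℂ) (x α : ℝ), 0 < α →
        (∀ M : ℕ, 1 ≤ M →
          ‖∑ m ∈ Finset.Icc 1 M, a m * Complex.exp (2 * (Real.pi : ℂ) * Complex.I * m * x)‖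
            ≤ α * (M : ℝ) ^ ((1 : ℝ) / 2 + ε)) →
        ∀ y : ℝ, 0 < y → y ≤ 1 →
          ‖(y : ℂ) * ∑' n : ℕ,
              a (n + 1) * (((n + 1 : ℕ) : ℝ) ^ ((1 : ℝ) / 2) : ℝ)
                * Complex.exp (2 * (Real.pi : ℂ) * Complex.I * (n + 1 : ℕ) * x)
                * (Real.exp (-2 * Real.pi * (n + 1 : ℕ) * y) : ℝ)‖
            ≤ C * α * y ^ (-ε) := by
  refine ⟨(2 * π + 1 / 2) * exp π / π, by positivity, fun a x α hα hS y hy hy1 => ?_⟩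
  convert norm_mul_tsum_sqrtExpWeight_le hα.le hε.le (by linarith) hS hy hy1 using 5 with n
  simp only [sqrtExpWeight]
  push_cast
  ring
end

section
/- Let p be a prime and z = a/p + i/p³ with a an integer coprime to p. Then Im(z) = p^{−3}, and for every γ = [[α,β],[γ',δ]] ∈ SL₂(ℤ) with p² | γ', one has Im(γ·z) ≤ Im(z); that is, z has maximal imaginary part in its Γ₀(p²)-orbit. -/
/-!
For `γ = [[α, β], [γ', δ]] ∈ SL₂(ℝ)` one has `Im(γ·z) = Im z / |γ'z + δ|²`, so it suffices to show
`|γ'z + δ|² ≥ 1`. Since `Re z = a/p` and `γ' = p²c`, the real part of `γ'z + δ` is the integer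
`pca + δ`; it cannot vanish, for otherwise `p` would divide both `γ'` and `δ`, which are coprime.
-/

open Complex

theorem Complex.im_div_of_det_eq_one {α β γ δ : ℝ} (hdet : α * δ - β * γ = 1) (z : ℂ) :
    ((α * z + β) / (γ * z + δ)).im = z.im / normSq (γ * z + δ) := by
  have hnum : (α * z.im) * (γ * z.re + δ) - (α * z.re + β) * (γ * z.im) = z.im := by
    linear_combination z.im * hdet
  simp only [div_im, add_re, add_im, mul_re, mul_im, ofReal_re, ofReal_im, zero_mul,
    sub_zero, add_zero]
  rw [div_sub_div_same, hnum]

theorem Int.mul_add_ne_zero_of_isCoprime {p c a δ : ℤ} (hp : ¬IsUnit p)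
    (hcop : IsCoprime (p ^ 2 * c) δ) : p * c * a + δ ≠ 0 := by
  intro h
  have hδ : δ = p * (-(c * a)) := by linear_combination h
  exact hp (hcop.isUnit_of_dvd' (Dvd.intro (p * c) (by ring)) (Dvd.intro _ hδ.symm))

theorem Complex.one_le_normSq_intCast_mul_add {p a γ δ : ℤ} (hp : ¬IsUnit p) (hγ : p ^ 2 ∣ γ)
    (hcop : IsCoprime γ δ) {z : ℂ} (hz : z.re = a / p) : 1 ≤ normSq (γ * z + δ) := by
  obtain ⟨c, rfl⟩ := hγ
  have hre : (((p ^ 2 * c : ℤ) : ℂ) * z + δ).re = ((p * c * a + δ : ℤ) : ℝ) := by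
    rcases eq_or_ne p 0 with rfl | hp0
    · simp
    · simp only [add_re, mul_re, intCast_re, intCast_im, zero_mul, sub_zero, hz]
      push_cast
      field_simp
  have hne : p * c * a + δ ≠ 0 := Int.mul_add_ne_zero_of_isCoprime hp hcop
  calc (1 : ℝ) ≤ ((p * c * a + δ : ℤ) : ℝ) ^ 2 :=
        mod_cast (one_le_sq_iff_one_le_abs _).mpr (Int.one_le_abs hne)
    _ = (((p ^ 2 * c : ℤ) : ℂ) * z + δ).re ^ 2 := by rw [hre]
    _ ≤ normSq (((p ^ 2 * c : ℤ) : ℂ) * z + δ) := by rw [sq]; exact re_sq_le_normSq _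

theorem stmt_8_general (p : ℕ) (hp : p.Prime) (a : ℤ) :
    (((a : ℂ) / (p : ℂ) + Complex.I / (p : ℂ) ^ 3).im = ((p : ℝ) ^ 3)⁻¹) ∧
    ∀ α β γ δ : ℤ, α * δ - β * γ = 1 → ((p : ℤ) ^ 2 ∣ γ) →
      (((α : ℂ) * ((a : ℂ) / (p : ℂ) + Complex.I / (p : ℂ) ^ 3) + (β : ℂ)) /
          ((γ : ℂ) * ((a : ℂ) / (p : ℂ) + Complex.I / (p : ℂ) ^ 3) + (δ : ℂ))).im
        ≤ ((a : ℂ) / (p : ℂ) + Complex.I / (p : ℂ) ^ 3).im := by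
  set z : ℂ := (a : ℂ) / (p : ℂ) + Complex.I / (p : ℂ) ^ 3 with hz
  have hz_re : z.re = a / p := by
    rw [hz, ← Nat.cast_pow]
    simp only [add_re, div_natCast_re, intCast_re, I_re, zero_div, add_zero]
  have hz_im : z.im = ((p : ℝ) ^ 3)⁻¹ := by
    rw [hz, ← Nat.cast_pow]
    simp only [add_im, div_natCast_im, intCast_im, I_im, zero_div, zero_add]
    push_cast
    ring
  refine ⟨hz_im, fun α β γ δ hdet hγ => ?_⟩
  have hdetℝ : (α : ℝ) * δ - β * γ = 1 := by exact_mod_cast hdet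
  have hcop : IsCoprime γ δ := ⟨-β, α, by linear_combination hdet⟩
  have hnormSq := Complex.one_le_normSq_intCast_mul_add
    (Nat.prime_iff_prime_int.mp hp).not_isUnit hγ hcop (a := a) (by exact_mod_cast hz_re)
  simp only [← ofReal_intCast] at hnormSq ⊢
  rw [Complex.im_div_of_det_eq_one hdetℝ]
  exact div_le_self (by rw [hz_im]; positivity) hnormSq

/-- for `z = a/p + i/p³` with `gcd(a,p) = 1`, one has `Im z = p⁻³` and
`z` has maximal imaginary part in its `Γ₀(p²)`-orbit. -/
theorem stmt_8 (p : ℕ) (hp : p.Prime) (a : ℤ) (ha : IsCoprime a (p : ℤ)) :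
    (((a : ℂ) / (p : ℂ) + Complex.I / (p : ℂ) ^ 3).im = ((p : ℝ) ^ 3)⁻¹) ∧
    ∀ α β γ δ : ℤ, α * δ - β * γ = 1 → ((p : ℤ) ^ 2 ∣ γ) →
      (((α : ℂ) * ((a : ℂ) / (p : ℂ) + Complex.I / (p : ℂ) ^ 3) + (β : ℂ)) /
          ((γ : ℂ) * ((a : ℂ) / (p : ℂ) + Complex.I / (p : ℂ) ^ 3) + (δ : ℂ))).im
        ≤ ((a : ℂ) / (p : ℂ) + Complex.I / (p : ℂ) ^ 3).im :=
  stmt_8_general p hp a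
end
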